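/- arXiv:1708.01028 — 4 statements merged into one kernel-verified Lean document; each statement's English description precedes it below -/
import Mathlib

section
/- Let $\mathcal{A}$ be a unital C*-algebra in which every hermitian element has finite spectrum. Then $\mathcal{A}$ is finite dimensional. -/
/-!
If `p₀, p₁, …` were infinitely many pairwise orthogonal nonzero projections, the self-adjoint
element `∑ 2⁻ⁿ pₙ` would have every `2⁻ⁿ` in its spectrum. Hence the projections satisfy the
descending chain condition (differences along a strictly decreasing chain are orthogonal), so `1`
is a finite sum of minimal projections `eᵢ`. For a minimal projection `e` and self-adjoint `b` in
the corner `e A e`, the spectral projection of `b` at a nonzero point of its (finite) spectrum lies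
under `e`, hence equals `e`, so `b` is a real multiple of `e`; thus `e A e = ℂ e`. Finally
`eᵢ A eⱼ` is at most one-dimensional: for `g, x ∈ eᵢ A eⱼ` with `g ≠ 0`, the C⋆-identity makes
`g⋆ g` a nonzero multiple of `eⱼ`, and `x g⋆ ∈ ℂ eᵢ`, so `x ∈ ℂ g`. Since `A = ∑ᵢⱼ eᵢ A eⱼ`,
`A` is finite dimensional.
-/

open scoped ComplexStarModule

theorem mem_spectrum_of_mul_eq_smul {R A : Type*} [CommSemiring R] [Ring A] [Algebra R A]
    {a v : A} {r : R} (hv : v ≠ 0) (h : a * v = r • v) : r ∈ spectrum R a := by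
  intro hu
  refine hv ((hu.mul_right_eq_zero).1 ?_)
  rw [sub_mul, h, Algebra.algebraMap_eq_smul_one, smul_one_mul, sub_self]

section MinimalProjection

variable {R : Type*} [Mul R] [Star R] [Zero R] [PartialOrder R]

def IsMinimalProjection (e : R) : Prop := Minimal (fun q : R ↦ IsStarProjection q ∧ q ≠ 0) e

theorem IsMinimalProjection.isStarProjection {e : R} (he : IsMinimalProjection e) :
    IsStarProjection e :=
  he.1.1

theorem IsMinimalProjection.ne_zero {e : R} (he : IsMinimalProjection e) : e ≠ 0 := he.1.2

theorem IsMinimalProjection.eq_of_le {e q : R} (he : IsMinimalProjection e)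
    (hq : IsStarProjection q) (hq0 : q ≠ 0) (hqe : q ≤ e) : q = e :=
  le_antisymm hqe (he.2 ⟨hq, hq0⟩ hqe)

end MinimalProjection

section CStarAlgebra

variable {A : Type*} [CStarAlgebra A]

theorem exists_isSelfAdjoint_spectrum_infinite_of_pairwise_mul_eq_zero
    (p : ℕ → A) (hp : ∀ n, IsStarProjection (p n))
    (hp0 : ∀ n, p n ≠ 0) (horth : Pairwise fun m n ↦ p m * p n = 0) :
    ∃ a : A, IsSelfAdjoint a ∧ (spectrum ℝ a).Infinite := by
  have hsum : Summable fun n ↦ (2⁻¹ : ℝ) ^ n • p n := by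
    refine .of_norm_bounded (summable_geometric_two) fun n ↦ ?_
    simpa [norm_smul] using IsStarProjection.norm_le _ (hp n)
  refine ⟨∑' n, (2⁻¹ : ℝ) ^ n • p n, ?_, ?_⟩
  · simp only [IsSelfAdjoint, tsum_star, star_smul, star_trivial, (hp _).isSelfAdjoint.star_eq]
  · have heigen (m : ℕ) : (∑' n, (2⁻¹ : ℝ) ^ n • p n) * p m = (2⁻¹ : ℝ) ^ m • p m := by
      rw [← hsum.tsum_mul_right,
        tsum_eq_single m fun n hn ↦ by rw [smul_mul_assoc, horth hn, smul_zero],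
        smul_mul_assoc, (hp m).isIdempotentElem.eq]
    exact Set.infinite_of_injective_forall_mem (pow_right_injective₀ (by norm_num) (by norm_num))
      fun m ↦ mem_spectrum_of_mul_eq_smul (hp0 m) (heigen m)

theorem IsSelfAdjoint.exists_eigenprojection {b : A} (hb : IsSelfAdjoint b)
    (hfin : (spectrum ℝ b).Finite) {r : ℝ} (hr : r ∈ spectrum ℝ b) (hr0 : r ≠ 0) :
    ∃ q y : A, IsStarProjection q ∧ q ≠ 0 ∧ b * q = r • q ∧ q = b * y := by
  have hcont (g : ℝ → ℝ) : ContinuousOn g (spectrum ℝ b) := hfin.continuousOn g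
  have hmul (g : ℝ → ℝ) : b * cfc g b = cfc (fun t ↦ t * g t) b := by
    rw [cfc_mul (fun t ↦ t) g b (hcont _) (hcont _), cfc_id' ℝ b]
  let f : ℝ → ℝ := fun t ↦ if t = r then 1 else 0
  -- `f t = t * (r⁻¹ * f t)` because `f` vanishes at `0`: this puts `cfc f b` in `b A`.
  refine ⟨cfc f b, cfc (fun t ↦ r⁻¹ * f t) b, ⟨?_, cfc_predicate f b⟩, fun h ↦ ?_, ?_, ?_⟩
  · rw [IsIdempotentElem, ← cfc_mul f f b (hcont _) (hcont _)]
    congr! 2 with t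
    by_cases ht : t = r <;> simp [f, ht]
  · rw [← cfc_zero ℝ b] at h
    simpa [f] using eqOn_of_cfc_eq_cfc h (hcont _) (hcont _) hb hr
  · rw [hmul, ← cfc_smul r f b (hcont _)]
    congr! 2 with t
    by_cases ht : t = r <;> simp [f, ht]
  · rw [hmul]
    congr! 2 with t
    by_cases ht : t = r <;> simp [f, ht, hr0]

section Order

variable [PartialOrder A] [StarOrderedRing A]

theorem isWF_setOf_isStarProjection (hfin : ∀ a : A, IsSelfAdjoint a → (spectrum ℝ a).Finite) :
    {p : A | IsStarProjection p}.IsWF := by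
  refine Set.isWF_iff_no_descending_seq.2 fun P hP hproj ↦ ?_
  have hsucc (n : ℕ) : P (n + 1) ≤ P n := (hP n.lt_succ_self).le
  let d (n : ℕ) : A := P n - P (n + 1)
  have hd (n : ℕ) : IsStarProjection (d n) := ((hproj _).le_iff_sub (hproj n)).1 (hsucc n)
  have hd0 (n : ℕ) : d n ≠ 0 := sub_ne_zero.2 (hP n.lt_succ_self).ne'
  have hdP (n : ℕ) : d n ≤ P n := sub_le_self _ (hproj _).nonneg
  have hlt {m n : ℕ} (hmn : m < n) : d m * d n = 0 := by
    have h₁ : P (m + 1) * d n = d n :=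
      ((hd n).le_iff_mul_eq_right (hproj _)).1 ((hdP n).trans (hP.antitone hmn))
    have h₂ : d m * P (m + 1) = 0 := by
      rw [sub_mul, ((hproj _).le_iff_mul_eq_right (hproj m)).1 (hsucc m),
        (hproj _).isIdempotentElem.eq, sub_self]
    rw [← h₁, ← mul_assoc, h₂, zero_mul]
  have horth : Pairwise fun m n ↦ d m * d n = 0 := fun m n hmn ↦ by
    rcases hmn.lt_or_gt with h | h
    · exact hlt h
    · simpa [(hd m).isSelfAdjoint.star_eq, (hd n).isSelfAdjoint.star_eq] using congr(star $(hlt h))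
  obtain ⟨a, ha, hinf⟩ :=
    exists_isSelfAdjoint_spectrum_infinite_of_pairwise_mul_eq_zero d hd hd0 horth
  exact hinf (hfin a ha)

theorem exists_isMinimalProjection_le (hfin : ∀ a : A, IsSelfAdjoint a → (spectrum ℝ a).Finite)
    {r : A} (hr : IsStarProjection r) (hr0 : r ≠ 0) : ∃ e ≤ r, IsMinimalProjection e := by
  let S := {q : A | (IsStarProjection q ∧ q ≠ 0) ∧ q ≤ r}
  have hS : S.IsWF := (isWF_setOf_isStarProjection hfin).mono fun q hq ↦ hq.1.1
  obtain ⟨e, ⟨he, her⟩, hmin⟩ := hS.exists_minimal ⟨r, ⟨hr, hr0⟩, le_rfl⟩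
  exact ⟨e, her, he, fun q hq hqe ↦ hmin ⟨hq, hqe.trans her⟩ hqe⟩

theorem exists_sum_isMinimalProjection_eq
    (hfin : ∀ a : A, IsSelfAdjoint a → (spectrum ℝ a).Finite) {r : A} (hr : IsStarProjection r) :
    ∃ (n : ℕ) (e : Fin n → A), (∀ i, IsMinimalProjection (e i)) ∧ ∑ i, e i = r := by
  refine (isWF_setOf_isStarProjection hfin).induction hr
    (P := (∃ (n : ℕ) (e : Fin n → A), (∀ i, IsMinimalProjection (e i)) ∧ ∑ i, e i = ·))
    fun r hr ih ↦ ?_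
  by_cases hr0 : r = 0
  · exact ⟨0, Fin.elim0, Fin.rec0, by simp [hr0]⟩
  obtain ⟨e, her, he⟩ := exists_isMinimalProjection_le hfin hr hr0
  have hsub : IsStarProjection (r - e) := (he.isStarProjection.le_iff_sub hr).1 her
  have hlt : r - e < r :=
    (sub_le_self r he.isStarProjection.nonneg).lt_of_ne (by simpa using he.ne_zero)
  obtain ⟨n, f, hf, hsum⟩ := ih (r - e) hsub hlt
  exact ⟨n + 1, Fin.cons e f, Fin.cases he hf, by rw [Fin.sum_cons, hsum, add_sub_cancel]⟩

theorem IsMinimalProjection.exists_eq_smul_of_mul_eq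
    (hfin : ∀ a : A, IsSelfAdjoint a → (spectrum ℝ a).Finite) {e b : A}
    (he : IsMinimalProjection e) (hb : IsSelfAdjoint b) (heb : e * b = b) :
    ∃ c : ℝ, b = c • e := by
  have hbe : b * e = b := by
    simpa [hb.star_eq, he.isStarProjection.isSelfAdjoint.star_eq] using congr(star $heb)
  by_cases hspec : spectrum ℝ b ⊆ {0}
  · exact ⟨0, by rw [zero_smul]; exact CFC.eq_zero_of_spectrum_subset_zero b hspec hb⟩
  obtain ⟨r, hr, hr0⟩ := Set.not_subset.1 hspec
  obtain ⟨q, y, hq, hq0, hbq, hqy⟩ := hb.exists_eigenprojection (hfin b hb) hr hr0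
  have hqe : q = e :=
    he.eq_of_le hq hq0 (hq.le_of_mul_eq_right he.isStarProjection (by rw [hqy, ← mul_assoc, heb]))
  exact ⟨r, by rw [← hbe, ← hqe, hbq]⟩

theorem IsMinimalProjection.exists_mul_mul_self_eq_smul
    (hfin : ∀ a : A, IsSelfAdjoint a → (spectrum ℝ a).Finite) {e : A}
    (he : IsMinimalProjection e) (x : A) : ∃ c : ℂ, e * x * e = c • e := by
  have hcorner (y : A) (hy : IsSelfAdjoint y) : ∃ c : ℝ, e * y * e = c • e :=
    he.exists_eq_smul_of_mul_eq hfin (hy.conjugate_self he.isStarProjection.isSelfAdjoint)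
      (by rw [← mul_assoc, ← mul_assoc, he.isStarProjection.isIdempotentElem.eq])
  obtain ⟨c₁, h₁⟩ := hcorner _ (ℜ x).2
  obtain ⟨c₂, h₂⟩ := hcorner _ (ℑ x).2
  refine ⟨c₁ + Complex.I * c₂, ?_⟩
  rw [← realPart_add_I_smul_imaginaryPart x, mul_add, add_mul, h₁, mul_smul_comm, smul_mul_assoc,
    h₂, add_smul, mul_smul, Complex.coe_smul, Complex.coe_smul]

theorem IsMinimalProjection.exists_forall_mul_mul_mem_span_singleton
    (hfin : ∀ a : A, IsSelfAdjoint a → (spectrum ℝ a).Finite) {p q : A}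
    (hp : IsMinimalProjection p) (hq : IsMinimalProjection q) :
    ∃ g : A, ∀ x : A, p * x * q ∈ ℂ ∙ g := by
  by_cases hzero : ∀ x, p * x * q = 0
  · exact ⟨0, fun x ↦ by simp [hzero x]⟩
  push Not at hzero
  obtain ⟨x₀, hx₀⟩ := hzero
  have hpp := hp.isStarProjection.isIdempotentElem
  have hqq := hq.isStarProjection.isIdempotentElem
  have hstar : star (p * x₀ * q) = q * star x₀ * p := by
    simp only [star_mul, hp.isStarProjection.isSelfAdjoint.star_eq,
      hq.isStarProjection.isSelfAdjoint.star_eq, mul_assoc]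
  obtain ⟨μ, hμ⟩ := hq.exists_mul_mul_self_eq_smul hfin (star x₀ * p * x₀)
  have hgg : star (p * x₀ * q) * (p * x₀ * q) = μ • q := by
    rw [hstar, ← hμ]
    simp only [mul_assoc, hpp.mul_self_mul]
  have hμ0 : μ ≠ 0 := by
    rintro rfl
    rw [zero_smul, CStarRing.star_mul_self_eq_zero_iff] at hgg
    exact hx₀ hgg
  refine ⟨p * x₀ * q, fun x ↦ Submodule.mem_span_singleton.2 ?_⟩
  obtain ⟨c, hc⟩ := hp.exists_mul_mul_self_eq_smul hfin (x * q * star x₀)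
  refine ⟨μ⁻¹ * c, ?_⟩
  have hsmul : μ • (p * x * q) = c • (p * x₀ * q) := by
    calc μ • (p * x * q) = p * x * q * (star (p * x₀ * q) * (p * x₀ * q)) := by
          rw [hgg, mul_smul_comm, hqq.mul_mul_self]
      _ = (p * (x * q * star x₀) * p) * (p * x₀ * q) := by
          rw [hstar]
          simp only [mul_assoc, hpp.mul_self_mul, hqq.mul_self_mul]
      _ = c • (p * x₀ * q) := by
          rw [hc, smul_mul_assoc, ← mul_assoc, ← mul_assoc, hpp.eq]
  rw [mul_smul, ← hsmul, smul_smul, inv_mul_cancel₀ hμ0, one_smul]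

end Order

end CStarAlgebra

/-- **Lemma (finite spectrum implies finite dimensional).**
Let `A` be a unital C*-algebra in which every hermitian element has finite
spectrum.  Then `A` is finite dimensional (as a complex vector space). -/
theorem unital_cstar_finite_spectrum_selfAdjoint_implies_finiteDimensional
    (A : Type*) [CStarAlgebra A]
    (h : ∀ a : A, IsSelfAdjoint a → (spectrum ℂ a).Finite) :
    FiniteDimensional ℂ A := by
  let := CStarAlgebra.spectralOrder A
  have := CStarAlgebra.spectralOrderedRing A
  have hfin (a : A) (ha : IsSelfAdjoint a) : (spectrum ℝ a).Finite := by
    rw [← spectrum.preimage_algebraMap ℂ]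
    exact (h a ha).preimage (algebraMap ℝ ℂ).injective.injOn
  obtain ⟨n, e, he, hsum⟩ := exists_sum_isMinimalProjection_eq hfin (.one A)
  choose g hg using fun ij : Fin n × Fin n ↦
    (he ij.1).exists_forall_mul_mul_mem_span_singleton hfin (he ij.2)
  refine Module.finite_def.2 (Submodule.fg_def.2 ⟨_, Set.finite_range g, eq_top_iff.2 fun x _ ↦ ?_⟩)
  have hx : x = ∑ ij : Fin n × Fin n, e ij.1 * x * e ij.2 := by
    calc x = (∑ i, e i) * x * ∑ j, e j := by rw [hsum, one_mul, mul_one]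
      _ = _ := by rw [Finset.sum_mul, Finset.sum_mul_sum, Fintype.sum_prod_type]
  rw [hx]
  exact Submodule.sum_mem _ fun ij _ ↦
    Submodule.span_mono (Set.singleton_subset_iff.2 (Set.mem_range_self ij)) (hg ij x)
end

section
/- Let $G$ be a connected topological group acting on a nonempty set $X$, with the corresponding permutation unitary representation $\pi$ of $G$ on $\ell^2(X)$ given by $(\pi(g)\xi)(x) = \xi(g^{-1}\cdot x)$. Then every vector $\xi \in \ell^2(X)$ whose orbit map $g \mapsto \pi(g)\xi$ is continuous is fixed by $G$, i.e. $\pi(g)\xi = \xi$ for all $g \in G$. -/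
/-!
An `ℓ²` vector has countable support, hence only countably many values. For each `x`, the
coordinate `g ↦ (π g ξ) x = ξ (g⁻¹ • x)` is continuous (evaluation is continuous on `ℓ²`) and
takes values in that countable set; countable subsets of `ℂ` are totally disconnected, so on the
connected group `G` this coordinate is constant, equal to its value `ξ x` at `g = 1`.
-/

open Set

open scoped ENNReal

theorem PreconnectedSpace.constant_of_countable_range {α β : Type*} [TopologicalSpace α]
    [PreconnectedSpace α] [MetricSpace β] {f : α → β} (hf : Continuous f)
    (hrange : (range f).Countable) (x y : α) : f x = f y :=
  hrange.isTotallyDisconnected _ Subset.rfl (isPreconnected_range hf) ⟨x, rfl⟩ ⟨y, rfl⟩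

section Memℓp

variable {α E : Type*} [NormedAddCommGroup E] {p : ℝ≥0∞} {f : α → E}

theorem Memℓp.countable_support (hf : Memℓp f p) (hp : p ≠ ∞) :
    (Function.support f).Countable := by
  rcases eq_or_ne p 0 with rfl | hp₀
  · exact hf.finite_dsupport.countable
  have hp_pos : 0 < p.toReal := ENNReal.toReal_pos hp₀ hp
  convert (hf.summable hp_pos).countable_support using 1
  ext i
  simp [Real.rpow_eq_zero (norm_nonneg _) hp_pos.ne']

theorem Memℓp.countable_range (hf : Memℓp f p) (hp : p ≠ ∞) : (range f).Countable :=
  (((hf.countable_support hp).image f).insert 0).mono (Function.range_subset_insert_image_support f)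

end Memℓp

theorem continuous_vector_of_permutation_rep_is_fixed_general
    {G X : Type*} [Group G] [TopologicalSpace G]
    [ConnectedSpace G] [MulAction G X]
    (π : G → (lp (fun _ : X => ℂ) 2 ≃ₗᵢ[ℂ] lp (fun _ : X => ℂ) 2))
    (hπ : ∀ (g : G) (ξ : lp (fun _ : X => ℂ) 2) (x : X),
      (π g ξ : ∀ _ : X, ℂ) x = (ξ : ∀ _ : X, ℂ) (g⁻¹ • x))
    (ξ : lp (fun _ : X => ℂ) 2)
    (hcont : Continuous fun g : G => π g ξ) :
    ∀ g : G, π g ξ = ξ := by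
  intro g
  ext x
  have hcoord : Continuous fun h : G => (π h ξ : ∀ _ : X, ℂ) x :=
    (lp.evalCLM ℂ (fun _ : X => ℂ) 2 x).continuous.comp hcont
  have hrange : (range fun h : G => (π h ξ : ∀ _ : X, ℂ) x).Countable :=
    ((lp.memℓp ξ).countable_range ENNReal.ofNat_ne_top).mono <| by
      rintro _ ⟨h, rfl⟩
      exact ⟨h⁻¹ • x, (hπ h ξ x).symm⟩
  simpa [hπ] using PreconnectedSpace.constant_of_countable_range hcoord hrange g 1

/-- **Lemma (continuous vectors of permutation representations are fixed).**
Let `G` be a connected topological group acting on a nonempty set `X`, and let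
`π` be the corresponding permutation unitary representation of `G` on `ℓ²(X)`,
given by `(π g ξ) x = ξ (g⁻¹ • x)`.  Then every vector `ξ ∈ ℓ²(X)` whose orbit
map `g ↦ π g ξ` is continuous (for the norm topology) is fixed by `G`. -/
theorem continuous_vector_of_permutation_rep_is_fixed
    {G X : Type*} [Group G] [TopologicalSpace G] [IsTopologicalGroup G]
    [ConnectedSpace G] [MulAction G X] [Nonempty X]
    (π : G → (lp (fun _ : X => ℂ) 2 ≃ₗᵢ[ℂ] lp (fun _ : X => ℂ) 2))
    (hπ : ∀ (g : G) (ξ : lp (fun _ : X => ℂ) 2) (x : X),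
      (π g ξ : ∀ _ : X, ℂ) x = (ξ : ∀ _ : X, ℂ) (g⁻¹ • x))
    (ξ : lp (fun _ : X => ℂ) 2)
    (hcont : Continuous fun g : G => π g ξ) :
    ∀ g : G, π g ξ = ξ :=
  continuous_vector_of_permutation_rep_is_fixed_general π hπ ξ hcont
end

section
/- Define homeomorphisms $g_n : [0,1] \to [0,1]$ by $g_n(x) = x + h_n(x)$, where $h_n$ is the piecewise linear function vanishing at the points $k/2^n$ ($k = 0, \dots, 2^n$) and taking value $(1 - 2^{-n}) 2^{-(n+1)}$ at the midpoints $(2k+1)/2^{n+1}$. Then $\|g_n - \mathrm{id}\|_\infty \leq 2^{-n}$ and $\|g_n^{-1} - \mathrm{id}\|_\infty \leq 2^{-n}$, while $\int_0^1 \sqrt{g_n'(x)\, g_{n+1}'(x)}\, dx \to \tfrac{1}{2}$ as $n \to \infty$; consequently $\|\sqrt{g_n'} - \sqrt{g_{n+1}'}\|_{L^2} \to 1$, so the functions $\sqrt{g_n'}$ do not converge to the constant function $1$ in $L^2([0,1])$. -/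
open scoped Topology

/-- The piecewise linear "tent" function `h_n : [0,1] → ℝ` vanishing at the
points `k/2ⁿ` (`k = 0, …, 2ⁿ`) and taking the value `(1 - 2⁻ⁿ) 2⁻⁽ⁿ⁺¹⁾` at the
midpoints `(2k+1)/2ⁿ⁺¹`. -/
noncomputable def tentFun (n : ℕ) (x : ℝ) : ℝ :=
  (1 - (2 : ℝ) ^ (-(n : ℤ))) *
    ((2 : ℝ) ^ (-(n + 1 : ℤ)) -
      |x - (2 * (⌊(2 : ℝ) ^ (n : ℕ) * x⌋ : ℝ) + 1) * (2 : ℝ) ^ (-(n + 1 : ℤ))|)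

/-- The homeomorphisms `g_n(x) = x + h_n(x)` of `[0,1]`. -/
noncomputable def gFun (n : ℕ) (x : ℝ) : ℝ := x + tentFun n x

/-!
On each interval of length `2⁻⁽ⁿ⁺¹⁾` between consecutive points `j / 2ⁿ⁺¹`, `g_n` is affine with
slope `2 - 2⁻ⁿ` (even `j`) or `2⁻ⁿ` (odd `j`), and each such interval is the union of two
consecutive intervals of `g_{n+1}`. So for any `φ`, the integral of `φ (g_n', g_{n+1}')` over
`[0,1]` is the mean of `φ` over the four pairs of slopes. These pairs tend to `(2,2)`, `(2,0)`,
`(0,2)` and `(0,0)`, so for continuous `φ` the limits of such integrals are read off from these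
four values. The uniform bounds hold because `|h_n| ≤ 2⁻ⁿ` and `y - g_n y = -h_n y`.
-/

open Set Filter Finset MeasureTheory

lemma Function.Periodic.sum_range_mul {M : Type*} [AddCommMonoid M] {f : ℕ → M} {p : ℕ}
    (hf : Function.Periodic f p) (m : ℕ) :
    ∑ i ∈ range (m * p), f i = m • ∑ i ∈ range p, f i := by
  induction m with
  | zero => simp
  | succ m ih =>
    rw [add_mul, one_mul, sum_range_add, ih, succ_nsmul]
    congr 1
    exact sum_congr rfl fun i _ => by rw [add_comm]; exact hf.nat_mul m i

lemma intervalIntegral_eq_sum_of_eqOn_Ioo {f : ℝ → ℝ} {c : ℕ → ℝ} {H : ℝ} (hH : 0 ≤ H)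
    (N : ℕ) (hf : ∀ i < N, EqOn f (fun _ => c i) (Ioo (i * H) ((i + 1) * H))) :
    ∫ x in (0 : ℝ)..N * H, f x = ∑ i ∈ range N, c i * H := by
  have hle : ∀ i : ℕ, (i : ℝ) * H ≤ (i + 1) * H := fun i => by nlinarith
  have hint : ∀ i < N, IntervalIntegrable f volume (i * H) ((i + 1 : ℕ) * H) := fun i hi =>
    intervalIntegrable_const.congr_uIoo (by push_cast; exact uIoo_of_le (hle i) ▸ (hf i hi).symm)
  have hsum := intervalIntegral.sum_integral_adjacent_intervals (a := fun i : ℕ => i * H) hint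
  rw [Nat.cast_zero, zero_mul] at hsum
  rw [← hsum]
  refine sum_congr rfl fun i hi => ?_
  push_cast
  rw [intervalIntegral.integral_congr_Ioo_of_le (hle i) (hf i (mem_range.1 hi)),
    intervalIntegral.integral_const, smul_eq_mul]
  ring

lemma two_pow_mul_two_zpow_neg (n : ℕ) : (2 : ℝ) ^ n * 2 ^ (-(n : ℤ)) = 1 := by
  rw [zpow_neg, zpow_natCast, mul_inv_cancel₀ (by positivity)]

lemma two_zpow_neg_succ (n : ℕ) : (2 : ℝ) ^ (-(n + 1 : ℤ)) = 2 ^ (-(n : ℤ)) / 2 := by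
  rw [neg_add, zpow_add₀ two_ne_zero, zpow_neg_one, div_eq_mul_inv]

lemma tendsto_two_zpow_neg_atTop :
    Tendsto (fun n : ℕ => (2 : ℝ) ^ (-(n : ℤ))) atTop (𝓝 0) := by
  simpa [zpow_neg, ← inv_pow] using
    tendsto_pow_atTop_nhds_zero_of_lt_one (r := (2 : ℝ)⁻¹) (by norm_num) (by norm_num)

lemma floor_two_pow_mul_eq {n : ℕ} {k : ℤ} {x : ℝ}
    (hx : x ∈ Ico (k * (2 : ℝ) ^ (-(n : ℤ))) ((k + 1) * 2 ^ (-(n : ℤ)))) :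
    ⌊(2 : ℝ) ^ n * x⌋ = k := by
  have h : (0 : ℝ) < 2 ^ n := by positivity
  rw [Int.floor_eq_iff, ← div_le_iff₀' h, ← lt_div_iff₀' h]
  simpa [zpow_neg, div_eq_mul_inv] using hx

lemma abs_tentFun_le (n : ℕ) (x : ℝ) : |tentFun n x| ≤ (2 : ℝ) ^ (-(n : ℤ)) := by
  have hP : (0 : ℝ) < 2 ^ (-(n : ℤ)) := by positivity
  have hP1 : (2 : ℝ) ^ (-(n : ℤ)) ≤ 1 := zpow_le_one_of_nonpos₀ one_le_two (by simp)
  have hx : (2 : ℝ) ^ n * x * 2 ^ (-(n : ℤ)) = x := by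
    rw [mul_right_comm, two_pow_mul_two_zpow_neg, one_mul]
  have hk := mul_le_mul_of_nonneg_right (Int.floor_le ((2 : ℝ) ^ n * x)) hP.le
  have hk' := mul_lt_mul_of_pos_right (Int.lt_floor_add_one ((2 : ℝ) ^ n * x)) hP
  rw [tentFun, two_zpow_neg_succ]
  have hdist :
      |x - (2 * ⌊(2 : ℝ) ^ n * x⌋ + 1) * (2 ^ (-(n : ℤ)) / 2)| ≤ 2 ^ (-(n : ℤ)) / 2 :=
    abs_le.2 ⟨by linarith, by linarith⟩
  rw [abs_of_nonneg (mul_nonneg (by linarith) (by linarith))]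
  nlinarith [abs_nonneg (x - (2 * ⌊(2 : ℝ) ^ n * x⌋ + 1) * (2 ^ (-(n : ℤ)) / 2))]

lemma gFun_eventuallyEq_of_mem_Ioo {n : ℕ} {k : ℤ} {x : ℝ}
    (hx : x ∈ Ioo (k * (2 : ℝ) ^ (-(n : ℤ))) ((k + 1) * 2 ^ (-(n : ℤ)))) :
    gFun n =ᶠ[𝓝 x] fun y => y + (1 - 2 ^ (-(n : ℤ))) *
      (2 ^ (-(n + 1 : ℤ)) - |y - (2 * k + 1) * 2 ^ (-(n + 1 : ℤ))|) := by
  filter_upwards [Ioo_mem_nhds hx.1 hx.2] with y hy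
  rw [gFun, tentFun, floor_two_pow_mul_eq (Ioo_subset_Ico_self hy)]

lemma hasDerivAt_gFun {n : ℕ} {k : ℤ} {x : ℝ}
    (hx : x ∈ Ioo (k * (2 : ℝ) ^ (-(n : ℤ))) ((k + 1) * 2 ^ (-(n : ℤ))))
    (hc : x ≠ (2 * k + 1) * 2 ^ (-(n + 1 : ℤ))) :
    HasDerivAt (gFun n) (1 - (1 - 2 ^ (-(n : ℤ))) *
      SignType.sign (x - (2 * k + 1) * 2 ^ (-(n + 1 : ℤ)))) x := by
  have habs := (hasDerivAt_abs (sub_ne_zero.2 hc)).comp x ((hasDerivAt_id x).sub_const _)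
  exact (((hasDerivAt_id x).add ((habs.const_sub _).const_mul _)).congr_of_eventuallyEq
    (gFun_eventuallyEq_of_mem_Ioo hx)).congr_deriv (by simp; ring)

noncomputable def gFunSlope (n j : ℕ) : ℝ :=
  if Even j then 2 - 2 ^ (-(n : ℤ)) else 2 ^ (-(n : ℤ))

lemma deriv_gFun_of_mem {n j : ℕ} {x : ℝ}
    (hx : x ∈ Ioo (j * (2 : ℝ) ^ (-(n + 1 : ℤ))) ((j + 1) * 2 ^ (-(n + 1 : ℤ)))) :
    deriv (gFun n) x = gFunSlope n j := by
  have hH := two_zpow_neg_succ n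
  obtain ⟨k, rfl | rfl⟩ := Nat.even_or_odd' j
  · have hlt : x < (2 * ((k : ℤ) : ℝ) + 1) * 2 ^ (-(n + 1 : ℤ)) := by
      push_cast at hx ⊢; linarith [hx.2]
    rw [(hasDerivAt_gFun (k := k) ?_ hlt.ne).deriv, sign_neg (sub_neg.2 hlt), gFunSlope,
      if_pos (even_two_mul k)]
    · push_cast [SignType.coe_one]; ring
    · rw [hH] at hx; push_cast at hx ⊢; constructor <;> linarith [hx.1, hx.2]
  · have hlt : (2 * ((k : ℤ) : ℝ) + 1) * 2 ^ (-(n + 1 : ℤ)) < x := by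
      push_cast at hx ⊢; linarith [hx.1]
    rw [(hasDerivAt_gFun (k := k) ?_ hlt.ne').deriv, sign_pos (sub_pos.2 hlt), gFunSlope,
      if_neg (Nat.not_even_two_mul_add_one k)]
    · push_cast [SignType.coe_one]; ring
    · rw [hH] at hx; push_cast at hx ⊢; constructor <;> linarith [hx.1, hx.2]

lemma deriv_gFun_of_mem_succ {n i : ℕ} {x : ℝ}
    (hx : x ∈ Ioo (i * (2 : ℝ) ^ (-(n + 2 : ℤ))) ((i + 1) * 2 ^ (-(n + 2 : ℤ)))) :
    deriv (gFun n) x = gFunSlope n (i / 2) := by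
  have h1 : (2 * (i / 2 : ℕ) : ℝ) ≤ i := by exact_mod_cast Nat.mul_div_le i 2
  have h2 : (i + 1 : ℝ) ≤ 2 * (i / 2 : ℕ) + 2 := by
    exact_mod_cast (by omega : i + 1 ≤ 2 * (i / 2) + 2)
  have hH : (2 : ℝ) ^ (-(n + 2 : ℤ)) = 2 ^ (-(n + 1 : ℤ)) / 2 := by
    simpa [add_assoc, one_add_one_eq_two] using two_zpow_neg_succ (n + 1)
  rw [hH] at hx
  apply deriv_gFun_of_mem
  constructor <;> nlinarith [hx.1, hx.2]

lemma gFunSlope_add_two (n j : ℕ) : gFunSlope n (j + 2) = gFunSlope n j := by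
  simp [gFunSlope, Nat.even_add]

lemma integral_deriv_gFun_pair (n : ℕ) (φ : ℝ → ℝ → ℝ) :
    ∫ x in (0 : ℝ)..1, φ (deriv (gFun n) x) (deriv (gFun (n + 1)) x) =
      (φ (gFunSlope n 0) (gFunSlope (n + 1) 0) + φ (gFunSlope n 0) (gFunSlope (n + 1) 1) +
        φ (gFunSlope n 1) (gFunSlope (n + 1) 0) + φ (gFunSlope n 1) (gFunSlope (n + 1) 1)) /
        4 := by
  set c : ℕ → ℝ := fun i => φ (gFunSlope n (i / 2)) (gFunSlope (n + 1) i)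
  have hc : Function.Periodic c 4 := fun i => by
    simp only [c, show (i + 4) / 2 = i / 2 + 2 by omega, gFunSlope_add_two]
  have hH : (2 : ℝ) ^ n * 2 ^ (-(n + 2 : ℤ)) = 1 / 4 := by
    rw [neg_add, zpow_add₀ two_ne_zero, ← mul_assoc, two_pow_mul_two_zpow_neg]
    norm_num
  have hN : ((2 ^ n * 4 : ℕ) : ℝ) * 2 ^ (-(n + 2 : ℤ)) = 1 := by
    push_cast; linear_combination 4 * hH
  rw [← hN, intervalIntegral_eq_sum_of_eqOn_Ioo (c := c) (by positivity) _ fun i _ x hx => ?_,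
    ← sum_mul, hc.sum_range_mul, nsmul_eq_mul]
  · have h2 : gFunSlope (n + 1) 2 = gFunSlope (n + 1) 0 := gFunSlope_add_two _ 0
    have h3 : gFunSlope (n + 1) 3 = gFunSlope (n + 1) 1 := gFunSlope_add_two _ 1
    simp only [sum_range_succ, sum_range_zero, c, Nat.reduceDiv, h2, h3, zero_add]
    push_cast
    linear_combination (φ (gFunSlope n 0) (gFunSlope (n + 1) 0) +
      φ (gFunSlope n 0) (gFunSlope (n + 1) 1) + φ (gFunSlope n 1) (gFunSlope (n + 1) 0) +
      φ (gFunSlope n 1) (gFunSlope (n + 1) 1)) * hH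
  · simp only [c]
    rw [deriv_gFun_of_mem_succ hx, deriv_gFun_of_mem (j := i) (by simpa [add_assoc] using hx)]

lemma tendsto_integral_deriv_gFun_pair {φ : ℝ → ℝ → ℝ}
    (hφ : Continuous (Function.uncurry φ)) :
    Tendsto (fun n => ∫ x in (0 : ℝ)..1, φ (deriv (gFun n) x) (deriv (gFun (n + 1)) x)) atTop
      (𝓝 ((φ 2 2 + φ 2 0 + φ 0 2 + φ 0 0) / 4)) := by
  have h0 : Tendsto (fun n => gFunSlope n 0) atTop (𝓝 2) := by
    simpa [gFunSlope] using tendsto_two_zpow_neg_atTop.const_sub 2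
  have h1 : Tendsto (fun n => gFunSlope n 1) atTop (𝓝 0) := by
    simpa [gFunSlope] using tendsto_two_zpow_neg_atTop
  have h0' := h0.comp (tendsto_add_atTop_nat 1)
  have h1' := h1.comp (tendsto_add_atTop_nat 1)
  have hφ' : ∀ {a b : ℝ} {u v : ℕ → ℝ}, Tendsto u atTop (𝓝 a) → Tendsto v atTop (𝓝 b) →
      Tendsto (fun n => φ (u n) (v n)) atTop (𝓝 (φ a b)) := fun hu hv =>
    (hφ.tendsto _).comp (hu.prodMk_nhds hv)
  simp_rw [integral_deriv_gFun_pair]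
  exact ((((hφ' h0 h0').add (hφ' h0 h1')).add (hφ' h1 h0')).add (hφ' h1 h1')).div_const 4

/-- **Example 2.6 (discontinuity of the `u`-topology action):**
the homeomorphisms `g_n = id + h_n` of `[0,1]` satisfy
`‖g_n − id‖_∞ ≤ 2⁻ⁿ` and `‖g_n⁻¹ − id‖_∞ ≤ 2⁻ⁿ`, while
`∫₀¹ √(g_n' g_{n+1}') → 1/2`, hence
`‖√(g_n') − √(g_{n+1}')‖_{L²} → 1`; consequently the functions `√(g_n')` do
not converge to the constant function `1` in `L²([0,1])`. -/
theorem gFun_near_id_but_sqrt_deriv_not_L2_convergent :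
    -- `‖g_n − id‖_∞ ≤ 2⁻ⁿ`
    (∀ (n : ℕ), ∀ x ∈ Set.Icc (0 : ℝ) 1, |gFun n x - x| ≤ (2 : ℝ) ^ (-(n : ℤ))) ∧
    -- `‖g_n⁻¹ − id‖_∞ ≤ 2⁻ⁿ`
    (∀ (n : ℕ), ∀ x ∈ Set.Icc (0 : ℝ) 1, ∀ y ∈ Set.Icc (0 : ℝ) 1,
      gFun n y = x → |y - x| ≤ (2 : ℝ) ^ (-(n : ℤ))) ∧
    -- `∫₀¹ √(g_n' g_{n+1}') → 1/2`
    Filter.Tendsto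
      (fun n : ℕ => ∫ x in (0 : ℝ)..1, Real.sqrt (deriv (gFun n) x * deriv (gFun (n + 1)) x))
      Filter.atTop (𝓝 (1 / 2 : ℝ)) ∧
    -- `‖√(g_n') − √(g_{n+1}')‖_{L²} → 1`
    Filter.Tendsto
      (fun n : ℕ =>
        Real.sqrt (∫ x in (0 : ℝ)..1,
          (Real.sqrt (deriv (gFun n) x) - Real.sqrt (deriv (gFun (n + 1)) x)) ^ 2))
      Filter.atTop (𝓝 (1 : ℝ)) ∧
    -- `√(g_n')` does not converge to `1` in `L²([0,1])`
    ¬ Filter.Tendsto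
      (fun n : ℕ => ∫ x in (0 : ℝ)..1, (Real.sqrt (deriv (gFun n) x) - 1) ^ 2)
      Filter.atTop (𝓝 (0 : ℝ)) := by
  refine ⟨fun n x _ => by simpa [gFun] using abs_tentFun_le n x, ?_, ?_, ?_, fun h => ?_⟩
  · rintro n x - y - rfl
    simpa [gFun] using abs_tentFun_le n y
  · convert tendsto_integral_deriv_gFun_pair (φ := fun u v => √(u * v)) (by fun_prop) using 2
    norm_num
  · convert (tendsto_integral_deriv_gFun_pair
      (φ := fun u v => (√u - √v) ^ 2) (by fun_prop)).sqrt using 2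
    norm_num
  · have := tendsto_nhds_unique h
      (tendsto_integral_deriv_gFun_pair (φ := fun u _ => (√u - 1) ^ 2) (by fun_prop))
    nlinarith [sq_nonneg (√2 - 1)]
end

section
/- Let $(X, \mathfrak{S}, \mu)$ be a $\sigma$-finite measure space and $\mathcal{A} \subseteq L^\infty(X,\mathfrak{S},\mu)$ a von Neumann subalgebra (acting as multiplication operators on $L^2(X,\mathfrak{S},\mu)$). Then $\mathfrak{A} := \{E \in \mathfrak{S} : \chi_E \in \mathcal{A}\}$ is a $\sigma$-subalgebra of $\mathfrak{S}$ and $\mathcal{A} = L^\infty(X, \mathfrak{A}, \mu|_{\mathfrak{A}})$ (as subalgebras of $L^\infty(X,\mathfrak{S},\mu)$, up to $\mu$-null modification). -/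
open MeasureTheory Filter
open scoped ComplexConjugate Topology

/-!
By dominated convergence, weak-operator closedness implies that `𝒜` contains every bounded
measurable function that is the a.e. limit of a uniformly bounded sequence in `𝒜`.
This makes `𝔄` closed under countable unions, and it makes `𝒜` closed under `u ↦ g ∘ u` for
real `u ∈ 𝒜` and continuous `g` (Weierstrass approximation of `g` by polynomials). Taking for
`g` ramps converging to the indicator of `(c, ∞)` shows `{c < u} ∈ 𝔄`, so each element of `𝒜`,
split into real and imaginary parts, is `𝔄`-measurable. Conversely, a bounded `𝔄`-measurable
function is a bounded pointwise limit of `𝔄`-simple functions, which lie in `𝒜` by linearity.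
-/

section

variable {X : Type*}

def BddAELimitClosed {_ : MeasurableSpace X} (μ : Measure X) (A : Set (X → ℂ)) : Prop :=
  ∀ ⦃F : ℕ → X → ℂ⦄ ⦃f : X → ℂ⦄ (C : ℝ), (∀ n, F n ∈ A) → Measurable f →
    (∀ n x, ‖F n x‖ ≤ C) → (∀ x, ‖f x‖ ≤ C) →
    (∀ᵐ x ∂μ, Tendsto (fun n => F n x) atTop (𝓝 (f x))) → f ∈ A

lemma norm_indicator_one_le (E : Set X) (x : X) : ‖E.indicator (fun _ => (1 : ℂ)) x‖ ≤ 1 :=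
  (norm_indicator_le_norm_self _ x).trans norm_one.le

lemma tendsto_min_one_natCast_mul_max_zero_sub (c t : ℝ) :
    Tendsto (fun n : ℕ => min 1 (n * max 0 (t - c))) atTop
      (𝓝 (if c < t then 1 else 0)) := by
  by_cases hct : c < t
  · have hpos : 0 < max 0 (t - c) := lt_max_of_lt_right (sub_pos.mpr hct)
    rw [if_pos hct]
    refine tendsto_const_nhds.congr' ?_
    filter_upwards [(tendsto_natCast_atTop_atTop.atTop_mul_const hpos).eventually_ge_atTop 1]
      with n hn using (min_eq_left hn).symm
  · simp [hct, max_eq_left (sub_nonpos.mpr (not_lt.mp hct))]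

lemma MeasureTheory.SimpleFunc.coe_mem_of_forall_indicator_mem [MeasurableSpace X]
    {S : Submodule ℂ (X → ℂ)}
    (hind : ∀ E, MeasurableSet E → E.indicator (fun _ => (1 : ℂ)) ∈ S) (F : SimpleFunc X ℂ) :
    ⇑F ∈ S := by
  induction F using SimpleFunc.induction with
  | @const c E hE =>
    convert S.smul_mem c (hind E hE) using 1
    ext x
    by_cases hx : x ∈ E <;> simp [hx]
  | add _ hF hG => exact S.add_mem hF hG

-- `m` comes last so that it is the instance picked up by `SimpleFunc`.
lemma mem_of_measurable_of_forall_indicator_mem {m0 : MeasurableSpace X} {μ : Measure[m0] X}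
    {m : MeasurableSpace X} {S : Submodule ℂ (X → ℂ)} (hm : m ≤ m0) (hS : BddAELimitClosed μ S)
    (hind : ∀ E, MeasurableSet[m] E → E.indicator (fun _ => (1 : ℂ)) ∈ S) {h : X → ℂ}
    (hh : Measurable[m] h) {C : ℝ} (hC : ∀ x, ‖h x‖ ≤ C) : h ∈ S := by
  let F := SimpleFunc.approxOn h hh Set.univ 0 (Set.mem_univ 0)
  exact hS (C + C) (fun n => SimpleFunc.coe_mem_of_forall_indicator_mem hind (F n))
    (hh.mono hm le_rfl)
    (fun n x => (SimpleFunc.norm_approxOn_zero_le hh _ x n).trans (add_le_add (hC x) (hC x)))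
    (fun x => (hC x).trans (le_add_of_nonneg_left ((norm_nonneg _).trans (hC x))))
    (.of_forall fun x => SimpleFunc.tendsto_approxOn hh _ (by simp))

lemma exists_measurable_norm_le_ae_eq {E : Type*} [NormedAddCommGroup E] [MeasurableSpace E]
    [OpensMeasurableSpace E] {m m0 : MeasurableSpace X} {μ : Measure[m0] X} {f g : X → E} {C : ℝ}
    (hg : Measurable[m] g) (hf : ∀ x, ‖f x‖ ≤ C) (hfg : f =ᵐ[μ] g) :
    ∃ h, Measurable[m] h ∧ (∀ x, ‖h x‖ ≤ C) ∧ f =ᵐ[μ] h := by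
  refine ⟨(g ⁻¹' Metric.closedBall 0 C).indicator g,
    hg.indicator (hg Metric.isClosed_closedBall.measurableSet), fun x => ?_,
    hfg.mono fun x hx => ?_⟩
  · by_cases hx : ‖g x‖ ≤ C
    · simp [hx]
    · simpa [hx] using (norm_nonneg _).trans (hf x)
  · rw [Set.indicator_of_mem (by simpa [← hx] using hf x), hx]

section Subalgebra

variable {S : Subalgebra ℂ (X → ℂ)}

lemma ofReal_polynomial_eval_comp_mem {u : X → ℝ} (huS : (fun x => (u x : ℂ)) ∈ S)
    (p : Polynomial ℝ) : (fun x => ((p.eval (u x) : ℝ) : ℂ)) ∈ S := by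
  have hmem : Polynomial.aeval (fun x => (u x : ℂ)) p ∈ S :=
    Algebra.adjoin_singleton_le (S := S.restrictScalars ℝ) huS
      (Polynomial.aeval_mem_adjoin_singleton ℝ _)
  convert hmem using 1
  ext x
  simp [Polynomial.aeval_pi_apply, ← Complex.coe_algebraMap, Polynomial.aeval_algebraMap_apply]

lemma indicator_compl_mem {E : Set X} (hE : E.indicator (fun _ => (1 : ℂ)) ∈ S) :
    Eᶜ.indicator (fun _ => (1 : ℂ)) ∈ S := by
  rw [Set.indicator_compl]
  exact sub_mem (one_mem S) hE

lemma indicator_union_mem {E F : Set X} (hE : E.indicator (fun _ => (1 : ℂ)) ∈ S)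
    (hF : F.indicator (fun _ => (1 : ℂ)) ∈ S) : (E ∪ F).indicator (fun _ => (1 : ℂ)) ∈ S := by
  have hinter : (Eᶜ ∩ Fᶜ).indicator (1 : X → ℂ) ∈ S := by
    rw [Set.inter_indicator_one]
    exact mul_mem (indicator_compl_mem hE) (indicator_compl_mem hF)
  have := indicator_compl_mem hinter
  rwa [Set.compl_inter, compl_compl, compl_compl] at this

end Subalgebra

section Measure

variable [MeasurableSpace X] {μ : Measure X}

lemma tendsto_integral_conj_mul_mul_of_ae_tendsto_zero {F : ℕ → X → ℂ}
    {φ ψ : X → ℂ} {C : ℝ} (hF : ∀ n, AEStronglyMeasurable (F n) μ) (hFC : ∀ n x, ‖F n x‖ ≤ C)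
    (hφ : MemLp φ 2 μ) (hψ : MemLp ψ 2 μ)
    (hlim : ∀ᵐ x ∂μ, Tendsto (fun n => F n x) atTop (𝓝 0)) :
    Tendsto (fun n => ∫ x, conj (φ x) * F n x * ψ x ∂μ) atTop (𝓝 0) := by
  have hφψ : Integrable (fun x => ‖φ x‖ * ‖ψ x‖) μ := hφ.norm.integrable_mul hψ.norm
  have hconj : AEStronglyMeasurable (fun x => conj (φ x)) μ :=
    Complex.continuous_conj.comp_aestronglyMeasurable hφ.aestronglyMeasurable
  rw [← integral_zero X ℂ]
  refine tendsto_integral_of_dominated_convergence (fun x => ‖φ x‖ * ‖ψ x‖ * C)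
    (fun n => (hconj.mul (hF n)).mul hψ.aestronglyMeasurable) (hφψ.mul_const C)
    (fun n => .of_forall fun x => by
      simpa [mul_right_comm] using mul_le_mul_of_nonneg_right
        (mul_le_mul_of_nonneg_left (hFC n x) (norm_nonneg (φ x))) (norm_nonneg (ψ x)))
    (hlim.mono fun x hx => by simpa using (hx.const_mul (conj (φ x))).mul_const (ψ x))

lemma bddAELimitClosed_of_weakOperatorClosed {A : Set (X → ℂ)}
    (hA_meas : ∀ f ∈ A, Measurable f)
    (hA_wot : ∀ f : X → ℂ, Measurable f → (∃ C : ℝ, ∀ x, ‖f x‖ ≤ C) →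
      (∀ ε > (0 : ℝ), ∀ (n : ℕ) (φ ψ : Fin n → X → ℂ),
        (∀ i, MemLp (φ i) 2 μ) → (∀ i, MemLp (ψ i) 2 μ) →
        ∃ g ∈ A, ∀ i, ‖∫ x, conj (φ i x) * (f x - g x) * ψ i x ∂μ‖ < ε) →
      f ∈ A) :
    BddAELimitClosed μ A := by
  intro F f C hFA hf hFC hfC hlim
  refine hA_wot f hf ⟨C, hfC⟩ fun ε hε n φ ψ hφ hψ => ?_
  have hsmall : ∀ i, ∀ᶠ k in atTop,
      ‖∫ x, conj (φ i x) * (f x - F k x) * ψ i x ∂μ‖ < ε := fun i =>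
    NormedAddGroup.tendsto_nhds_zero.mp
      (tendsto_integral_conj_mul_mul_of_ae_tendsto_zero (C := C + C)
        (fun k => (hf.sub (hA_meas _ (hFA k))).aestronglyMeasurable)
        (fun k x => norm_sub_le_of_le (hfC x) (hFC k x)) (hφ i) (hψ i)
        (hlim.mono fun x hx => by simpa using (tendsto_const_nhds (x := f x)).sub hx)) ε hε
  obtain ⟨k, hk⟩ := (eventually_all.mpr hsmall).exists
  exact ⟨F k, hFA k, hk⟩

variable {S : Subalgebra ℂ (X → ℂ)}

lemma ofReal_comp_mem_of_continuous (hS : BddAELimitClosed μ S) {u : X → ℝ} (hu : Measurable u)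
    {B : ℝ} (hB : ∀ x, |u x| ≤ B) (huS : (fun x => (u x : ℂ)) ∈ S) {g : ℝ → ℝ}
    (hg : Continuous g) : (fun x => (g (u x) : ℂ)) ∈ S := by
  have hu_mem : ∀ x, u x ∈ Set.Icc (-B) B := fun x => abs_le.mp (hB x)
  obtain ⟨D, hD⟩ :=
    isCompact_Icc.exists_bound_of_continuousOn (hg.continuousOn (s := Set.Icc (-B) B))
  choose p hp using fun k : ℕ => exists_polynomial_near_of_continuousOn (-B) B g hg.continuousOn
    (1 / (k + 1)) (by positivity)
  have hpg : ∀ k x, |(p k).eval (u x) - g (u x)| ≤ 1 / (k + 1) := fun k x =>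
    (hp k _ (hu_mem x)).le
  have hgD : ∀ x, |g (u x)| ≤ D := fun x => hD _ (hu_mem x)
  refine hS (D + 1) (fun k => ofReal_polynomial_eval_comp_mem huS (p k)) (by fun_prop)
    (fun k x => ?_) (fun x => ?_) (.of_forall fun x => ?_)
  · have hk : 1 / ((k : ℝ) + 1) ≤ 1 := div_le_one_of_le₀ (by simp) (by positivity)
    rw [Complex.norm_real, Real.norm_eq_abs]
    linarith [abs_sub_abs_le_abs_sub ((p k).eval (u x)) (g (u x)), hpg k x, hgD x]
  · rw [Complex.norm_real, Real.norm_eq_abs]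
    linarith [hgD x]
  · refine (Complex.continuous_ofReal.tendsto _).comp ?_
    rw [tendsto_iff_norm_sub_tendsto_zero]
    exact squeeze_zero (fun k => norm_nonneg _) (fun k => hpg k x)
      tendsto_one_div_add_atTop_nhds_zero_nat

lemma indicator_setOf_lt_mem (hS : BddAELimitClosed μ S) {u : X → ℝ} (hu : Measurable u)
    {B : ℝ} (hB : ∀ x, |u x| ≤ B) (huS : (fun x => (u x : ℂ)) ∈ S) (c : ℝ) :
    {x | c < u x}.indicator (fun _ => (1 : ℂ)) ∈ S := by
  refine hS 1 (fun n => ofReal_comp_mem_of_continuous hS hu hB huS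
      (g := fun t => min 1 (n * max 0 (t - c))) (by fun_prop))
    (measurable_const.indicator (measurableSet_lt measurable_const hu)) (fun n x => ?_)
    (norm_indicator_one_le _) (.of_forall fun x => ?_)
  · rw [Complex.norm_real, Real.norm_eq_abs, abs_le]
    constructor
    · linarith [le_min zero_le_one (mul_nonneg n.cast_nonneg (le_max_left 0 (u x - c)))]
    · exact min_le_left _ _
  · have h := (Complex.continuous_ofReal.tendsto _).comp
      (tendsto_min_one_natCast_mul_max_zero_sub c (u x))
    by_cases hx : c < u x <;> simpa [hx, Function.comp_def] using h

lemma indicator_iUnion_mem (hS : BddAELimitClosed μ S) {s : ℕ → Set X}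
    (hs : ∀ n, MeasurableSet (s n)) (hsS : ∀ n, (s n).indicator (fun _ => (1 : ℂ)) ∈ S) :
    (⋃ n, s n).indicator (fun _ => (1 : ℂ)) ∈ S := by
  have hacc : ∀ n, (Set.accumulate s n).indicator (fun _ => (1 : ℂ)) ∈ S := by
    intro n
    induction n with
    | zero => simpa using hsS 0
    | succ n ih => simpa using indicator_union_mem ih (hsS (n + 1))
  refine hS 1 hacc (measurable_const.indicator (.iUnion hs)) (fun n => norm_indicator_one_le _)
    (norm_indicator_one_le _) (.of_forall fun x => ?_)
  rw [← Set.iUnion_accumulate]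
  exact (Set.monotone_accumulate.tendsto_indicator _ _ x).mono_right (pure_le_nhds _)

/-- The σ-algebra `𝔄` of the theorem. -/
abbrev indicatorMeasurableSpace (hS : BddAELimitClosed μ S) : MeasurableSpace X where
  MeasurableSet' E := MeasurableSet E ∧ E.indicator (fun _ => (1 : ℂ)) ∈ S
  measurableSet_empty := ⟨.empty, by rw [Set.indicator_empty]; exact zero_mem S⟩
  measurableSet_compl _ hE := ⟨hE.1.compl, indicator_compl_mem hE.2⟩
  measurableSet_iUnion _ hs :=
    ⟨.iUnion fun n => (hs n).1, indicator_iUnion_mem hS (fun n => (hs n).1) fun n => (hs n).2⟩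

lemma indicatorMeasurableSpace_le (hS : BddAELimitClosed μ S) :
    indicatorMeasurableSpace hS ≤ ‹MeasurableSpace X› :=
  fun _ hE => hE.1

lemma measurable_indicatorMeasurableSpace_of_ofReal_comp_mem (hS : BddAELimitClosed μ S)
    {u : X → ℝ} (hu : Measurable u) {B : ℝ} (hB : ∀ x, |u x| ≤ B)
    (huS : (fun x => (u x : ℂ)) ∈ S) : Measurable[indicatorMeasurableSpace hS] u :=
  measurable_of_Ioi fun c =>
    ⟨measurableSet_lt measurable_const hu, indicator_setOf_lt_mem hS hu hB huS c⟩

end Measure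

lemma measurable_indicatorMeasurableSpace_of_mem [MeasurableSpace X] {μ : Measure X}
    {S : StarSubalgebra ℂ (X → ℂ)} (hS : BddAELimitClosed μ (S.toSubalgebra : Set (X → ℂ)))
    {f : X → ℂ} (hf : Measurable f) {C : ℝ} (hC : ∀ x, ‖f x‖ ≤ C) (hfS : f ∈ S) :
    Measurable[indicatorMeasurableSpace hS] f := by
  have hreS : (fun x => ((f x).re : ℂ)) ∈ S := by
    convert (SMulMemClass.smul_mem 2⁻¹ (add_mem hfS (star_mem hfS)) :
      (2⁻¹ : ℂ) • (f + star f) ∈ S) using 1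
    ext x; simp [Complex.re_eq_add_conj, div_eq_inv_mul]
  have himS : (fun x => ((f x).im : ℂ)) ∈ S := by
    convert (SMulMemClass.smul_mem _ (sub_mem hfS (star_mem hfS)) :
      (2 * Complex.I)⁻¹ • (f - star f) ∈ S) using 1
    ext x; simp [Complex.im_eq_sub_conj, div_eq_inv_mul]
  exact @measurable_of_re_im _ _ _ (indicatorMeasurableSpace hS) _
    (measurable_indicatorMeasurableSpace_of_ofReal_comp_mem hS (Complex.measurable_re.comp hf)
      (fun x => (Complex.abs_re_le_norm _).trans (hC x)) hreS)
    (measurable_indicatorMeasurableSpace_of_ofReal_comp_mem hS (Complex.measurable_im.comp hf)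
      (fun x => (Complex.abs_im_le_norm _).trans (hC x)) himS)

end

theorem Linfty_subalgebra_theorem_general
    {X : Type*} [m : MeasurableSpace X] (μ : Measure X)
    (A : Set (X → ℂ))
    -- `𝒜` consists of (representatives of) elements of `L^∞`
    (hA_meas : ∀ f ∈ A, Measurable f)
    -- `𝒜` is a unital *-subalgebra
    (hA_one : (fun _ : X => (1 : ℂ)) ∈ A)
    (hA_add : ∀ f ∈ A, ∀ g ∈ A, f + g ∈ A)
    (hA_mul : ∀ f ∈ A, ∀ g ∈ A, f * g ∈ A)
    (hA_smul : ∀ (c : ℂ), ∀ f ∈ A, c • f ∈ A)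
    (hA_star : ∀ f ∈ A, (fun x => conj (f x)) ∈ A)
    -- `𝒜` is stable under modification on `μ`-null sets
    (hA_ae : ∀ f ∈ A, ∀ g : X → ℂ, Measurable g → (∃ C : ℝ, ∀ x, ‖g x‖ ≤ C) →
      f =ᵐ[μ] g → g ∈ A)
    -- `𝒜` is closed in the weak operator topology of `B(L²(X,𝔖,μ))`
    (hA_wot : ∀ f : X → ℂ, Measurable f → (∃ C : ℝ, ∀ x, ‖f x‖ ≤ C) →
      (∀ ε > (0 : ℝ), ∀ (n : ℕ) (φ ψ : Fin n → X → ℂ),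
        (∀ i, MemLp (φ i) 2 μ) → (∀ i, MemLp (ψ i) 2 μ) →
        ∃ g ∈ A, ∀ i, ‖∫ x, conj (φ i x) * (f x - g x) * ψ i x ∂μ‖ < ε) →
      f ∈ A) :
    -- conclusion: `𝔄` is a σ-subalgebra of `𝔖` ...
    (Set.univ ∈ {E : Set X | MeasurableSet E ∧ Set.indicator E (fun _ => (1 : ℂ)) ∈ A}) ∧
    (∀ E ∈ {E : Set X | MeasurableSet E ∧ Set.indicator E (fun _ => (1 : ℂ)) ∈ A},
      Eᶜ ∈ {E : Set X | MeasurableSet E ∧ Set.indicator E (fun _ => (1 : ℂ)) ∈ A}) ∧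
    (∀ s : ℕ → Set X,
      (∀ k, s k ∈ {E : Set X | MeasurableSet E ∧ Set.indicator E (fun _ => (1 : ℂ)) ∈ A}) →
      (⋃ k, s k) ∈ {E : Set X | MeasurableSet E ∧ Set.indicator E (fun _ => (1 : ℂ)) ∈ A}) ∧
    -- ... and `𝒜 = L^∞(X, 𝔄, μ|_𝔄)` up to `μ`-null modification
    (∀ f : X → ℂ, Measurable f → (∃ C : ℝ, ∀ x, ‖f x‖ ≤ C) →
      (f ∈ A ↔ ∃ g : X → ℂ,
        Measurable[MeasurableSpace.generateFrom
          {E : Set X | MeasurableSet E ∧ Set.indicator E (fun _ => (1 : ℂ)) ∈ A}] g ∧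
        f =ᵐ[μ] g)) := by
  let S : StarSubalgebra ℂ (X → ℂ) :=
    { carrier := A
      mul_mem' hf hg := hA_mul _ hf _ hg
      one_mem' := hA_one
      add_mem' hf hg := hA_add _ hf _ hg
      zero_mem' := by simpa using hA_smul 0 _ hA_one
      algebraMap_mem' c := by
        rw [Algebra.algebraMap_eq_smul_one]
        exact hA_smul c _ hA_one
      star_mem' hf := hA_star _ hf }
  have hS : BddAELimitClosed μ (S.toSubalgebra : Set (X → ℂ)) :=
    bddAELimitClosed_of_weakOperatorClosed hA_meas hA_wot
  have hM : MeasurableSpace.generateFrom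
      {E : Set X | MeasurableSet E ∧ Set.indicator E (fun _ => (1 : ℂ)) ∈ A} =
        indicatorMeasurableSpace hS :=
    @MeasurableSpace.generateFrom_measurableSet X (indicatorMeasurableSpace hS)
  refine ⟨MeasurableSet.univ (m := indicatorMeasurableSpace hS),
    fun E hE => MeasurableSet.compl (m := indicatorMeasurableSpace hS) hE,
    fun s hs => MeasurableSet.iUnion (m := indicatorMeasurableSpace hS) hs,
    fun f hf ⟨C, hC⟩ => ?_⟩
  rw [hM]
  refine ⟨fun hfA => ⟨f, measurable_indicatorMeasurableSpace_of_mem hS hf hC hfA, .rfl⟩, ?_⟩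
  rintro ⟨g, hg, hfg⟩
  obtain ⟨h, hh, hhC, hfh⟩ := exists_measurable_norm_le_ae_eq hg hC hfg
  have hhA : h ∈ A := mem_of_measurable_of_forall_indicator_mem
    (S := Subalgebra.toSubmodule S.toSubalgebra) (indicatorMeasurableSpace_le hS) hS
    (fun E hE => hE.2) hh hhC
  exact hA_ae h hhA f hf ⟨C, hC⟩ hfh.symm

/-- **Theorem (the `L^∞`-Subalgebra Theorem).**
Let `(X, 𝔖, μ)` be a σ-finite measure space and let `𝒜 ⊆ L^∞(X, 𝔖, μ)` be a von
Neumann subalgebra, i.e. a *-subalgebra containing `1`, stable under `μ`-a.e.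
modification, and closed in the weak operator topology of the multiplication
action on `L²(X, 𝔖, μ)`.  Then
`𝔄 := {E ∈ 𝔖 : χ_E ∈ 𝒜}` is a σ-subalgebra of `𝔖`, and
`𝒜 = L^∞(X, 𝔄, μ|_𝔄)`: a bounded `𝔖`-measurable function lies in `𝒜` if and
only if it agrees `μ`-a.e. with an `𝔄`-measurable function. -/
theorem Linfty_subalgebra_theorem
    {X : Type*} [m : MeasurableSpace X] (μ : Measure X) [SigmaFinite μ]
    (A : Set (X → ℂ))
    -- `𝒜` consists of (representatives of) elements of `L^∞`
    (hA_meas : ∀ f ∈ A, Measurable f)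
    (hA_bdd : ∀ f ∈ A, ∃ C : ℝ, ∀ x, ‖f x‖ ≤ C)
    -- `𝒜` is a unital *-subalgebra
    (hA_one : (fun _ : X => (1 : ℂ)) ∈ A)
    (hA_add : ∀ f ∈ A, ∀ g ∈ A, f + g ∈ A)
    (hA_mul : ∀ f ∈ A, ∀ g ∈ A, f * g ∈ A)
    (hA_smul : ∀ (c : ℂ), ∀ f ∈ A, c • f ∈ A)
    (hA_star : ∀ f ∈ A, (fun x => conj (f x)) ∈ A)
    -- `𝒜` is stable under modification on `μ`-null sets
    (hA_ae : ∀ f ∈ A, ∀ g : X → ℂ, Measurable g → (∃ C : ℝ, ∀ x, ‖g x‖ ≤ C) →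
      f =ᵐ[μ] g → g ∈ A)
    -- `𝒜` is closed in the weak operator topology of `B(L²(X,𝔖,μ))`
    (hA_wot : ∀ f : X → ℂ, Measurable f → (∃ C : ℝ, ∀ x, ‖f x‖ ≤ C) →
      (∀ ε > (0 : ℝ), ∀ (n : ℕ) (φ ψ : Fin n → X → ℂ),
        (∀ i, MemLp (φ i) 2 μ) → (∀ i, MemLp (ψ i) 2 μ) →
        ∃ g ∈ A, ∀ i, ‖∫ x, conj (φ i x) * (f x - g x) * ψ i x ∂μ‖ < ε) →
      f ∈ A) :
    -- conclusion: `𝔄` is a σ-subalgebra of `𝔖` ...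
    (Set.univ ∈ {E : Set X | MeasurableSet E ∧ Set.indicator E (fun _ => (1 : ℂ)) ∈ A}) ∧
    (∀ E ∈ {E : Set X | MeasurableSet E ∧ Set.indicator E (fun _ => (1 : ℂ)) ∈ A},
      Eᶜ ∈ {E : Set X | MeasurableSet E ∧ Set.indicator E (fun _ => (1 : ℂ)) ∈ A}) ∧
    (∀ s : ℕ → Set X,
      (∀ k, s k ∈ {E : Set X | MeasurableSet E ∧ Set.indicator E (fun _ => (1 : ℂ)) ∈ A}) →
      (⋃ k, s k) ∈ {E : Set X | MeasurableSet E ∧ Set.indicator E (fun _ => (1 : ℂ)) ∈ A}) ∧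
    -- ... and `𝒜 = L^∞(X, 𝔄, μ|_𝔄)` up to `μ`-null modification
    (∀ f : X → ℂ, Measurable f → (∃ C : ℝ, ∀ x, ‖f x‖ ≤ C) →
      (f ∈ A ↔ ∃ g : X → ℂ,
        Measurable[MeasurableSpace.generateFrom
          {E : Set X | MeasurableSet E ∧ Set.indicator E (fun _ => (1 : ℂ)) ∈ A}] g ∧
        f =ᵐ[μ] g)) :=
  Linfty_subalgebra_theorem_general (m := m) μ A hA_meas hA_one hA_add hA_mul hA_smul hA_star hA_ae
    hA_wot
end
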